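/- For all natural numbers n, 25 times the sum over i from 0 to n of C(n,i)·F_i^4 equals 3^n·L_{2n} - 4·(-1)^n·L_n + 6·2^n. -/

import Mathlib

/-! By Binet's formulas, with `a = φ^i`, `b = ψ^i` and `ab = (-1)^i`, expanding `(a - b)^4` gives
`25 F_i^4 = L_{4i} - 4 (-1)^i L_{2i} + 6`, a combination of `x^i` for `x = φ^4, ψ^4, -φ^2, -ψ^2, 1`.
The binomial theorem sums each of these to `(1 + x)^n`, and for a root of `x^2 = x + 1` one has
`1 + x^4 = 3 x^2` and `1 - x^2 = -x`, which yields `3^n L_{2n}`, `(-1)^n L_n` and `2^n`. -/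

def lucas : ℕ → ℤ
  | 0 => 2
  | 1 => 1
  | n + 2 => lucas (n + 1) + lucas n

open Finset Real
open scoped goldenRatio

theorem coe_lucas_eq : ∀ n, (lucas n : ℝ) = φ ^ n + ψ ^ n
  | 0 => by norm_num [lucas]
  | 1 => by simp [lucas, goldenRatio_add_goldenConj]
  | n + 2 => by
    rw [lucas, Int.cast_add, coe_lucas_eq (n + 1), coe_lucas_eq n]
    linear_combination -φ ^ n * goldenRatio_sq - ψ ^ n * goldenConj_sq

theorem sum_range_choose_mul_pow {R : Type*} [CommSemiring R] (x : R) (n : ℕ) :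
    ∑ i ∈ range (n + 1), (n.choose i : R) * x ^ i = (1 + x) ^ n := by
  rw [add_comm 1 x, add_pow]
  exact sum_congr rfl fun i _ ↦ by rw [one_pow, mul_one, mul_comm]

theorem one_add_pow_four_of_sq_eq_add_one {R : Type*} [CommRing R] {x : R} (hx : x ^ 2 = x + 1) :
    1 + x ^ 4 = 3 * x ^ 2 := by
  linear_combination (x ^ 2 + x - 1) * hx

theorem one_add_neg_sq_of_sq_eq_add_one {R : Type*} [CommRing R] {x : R} (hx : x ^ 2 = x + 1) :
    1 + -x ^ 2 = -x := by
  linear_combination -hx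

theorem twentyfive_mul_coe_fib_pow_four (i : ℕ) :
    25 * (Nat.fib i : ℝ) ^ 4 =
      (φ ^ 4) ^ i + (ψ ^ 4) ^ i - 4 * ((-φ ^ 2) ^ i + (-ψ ^ 2) ^ i) + 6 := by
  have hab : φ ^ i * ψ ^ i = (-1) ^ i := by rw [← mul_pow, goldenRatio_mul_goldenConj]
  have hs : ((-1 : ℝ) ^ i) ^ 2 = 1 := by rw [← pow_mul, pow_mul', neg_one_sq, one_pow]
  have h5 : √5 ^ 4 = 25 := by
    rw [show √5 ^ 4 = (√5 ^ 2) ^ 2 by ring, sq_sqrt (by norm_num : (0 : ℝ) ≤ 5)]; norm_num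
  rw [coe_fib_eq, div_pow, h5, neg_pow (φ ^ 2), neg_pow (ψ ^ 2), pow_right_comm φ 4,
    pow_right_comm ψ 4, pow_right_comm φ 2, pow_right_comm ψ 2]
  linear_combination (6 * (φ ^ i * ψ ^ i + (-1) ^ i) - 4 * (φ ^ i) ^ 2 - 4 * (ψ ^ i) ^ 2) * hab
    + 6 * hs

theorem stmt_6 (n : ℕ) :
    25 * ∑ i ∈ Finset.range (n + 1), (n.choose i : ℤ) * (Nat.fib i : ℤ) ^ 4 =
      3 ^ n * lucas (2 * n) - 4 * (-1 : ℤ) ^ n * lucas n + 6 * 2 ^ n := by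
  apply Int.cast_injective (α := ℝ)
  push_cast
  have hsum : 25 * ∑ i ∈ range (n + 1), (n.choose i : ℝ) * (Nat.fib i : ℝ) ^ 4 =
      (1 + φ ^ 4) ^ n + (1 + ψ ^ 4) ^ n - 4 * ((1 + -φ ^ 2) ^ n + (1 + -ψ ^ 2) ^ n)
        + 6 * (1 + 1) ^ n := by
    simp only [mul_sum, mul_left_comm (25 : ℝ), twentyfive_mul_coe_fib_pow_four,
      ← sum_range_choose_mul_pow, one_pow, ← sum_add_distrib, ← sum_sub_distrib]
    exact sum_congr rfl fun i _ ↦ by ring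
  rw [hsum, one_add_pow_four_of_sq_eq_add_one goldenRatio_sq,
    one_add_pow_four_of_sq_eq_add_one goldenConj_sq,
    one_add_neg_sq_of_sq_eq_add_one goldenRatio_sq, one_add_neg_sq_of_sq_eq_add_one goldenConj_sq,
    coe_lucas_eq, coe_lucas_eq, mul_pow, mul_pow, neg_pow φ, neg_pow ψ, pow_mul, pow_mul]
  ring
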